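/- For the pause extension R_p with pause start T_e and pause length Δ_p, every computed completion time avoids the pause interval: for every j,k, either R_p(j,k) ≤ T_e, or the start time ∘R(j,k) of the operation satisfies ∘R(j,k) ≥ T_e + Δ_p, or R_p(j,k) ≥ T_e + Δ_p. In particular no operation both starts at or before T_e and finishes strictly inside the interval (T_e, T_e+Δ_p]. -/

import Mathlib

/-!
Call a time *outside the pause* if it is `≤ T_e` or `≥ T_e + Δ_p`. The start time `0` is outside,
a maximum of outside times is outside, and `R_p` maps an outside start time to an outside
completion time: it either finishes by `T_e`, starts after `T_e` (hence at `≥ T_e + Δ_p`), or is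
pushed to `T_e + Δ_p + p`. Induction over the grid of operations shows that all start and
completion times are outside the pause.
-/

def OutsidePause (Te Δp x : ℕ) : Prop := x ≤ Te ∨ Te + Δp ≤ x

theorem outsidePause_zero (Te Δp : ℕ) : OutsidePause Te Δp 0 :=
  .inl (Nat.zero_le _)

theorem OutsidePause.max {Te Δp a b : ℕ} (ha : OutsidePause Te Δp a)
    (hb : OutsidePause Te Δp b) : OutsidePause Te Δp (max a b) := by
  unfold OutsidePause at *
  omega

/-- The paper's `R_p(j,k)` for start time `s = ∘R_p(j,k)` and processing time `q = p(j,k)`. -/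
def pauseCompletion (Te Δp s q : ℕ) : ℕ :=
  if s + q ≤ Te then s + q else if Te < s then s + q else Te + Δp + q

theorem OutsidePause.pauseCompletion {Te Δp s : ℕ} (hs : OutsidePause Te Δp s) (q : ℕ) :
    OutsidePause Te Δp (pauseCompletion Te Δp s q) := by
  unfold OutsidePause _root_.pauseCompletion at *
  split_ifs <;> omega

theorem not_le_and_pauseCompletion_mem_Ioc (Te Δp s q : ℕ) :
    ¬(s ≤ Te ∧ pauseCompletion Te Δp s q ∈ Set.Ioc Te (Te + Δp)) := by
  unfold pauseCompletion
  split_ifs <;> simp only [Set.mem_Ioc] <;> omega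

theorem completion_grid_induction {P : ℕ → Prop} {n m : ℕ} {S R : ℕ → ℕ → ℕ}
    (h11 : P (S 1 1))
    (hS1k : ∀ k, 1 < k → k ≤ m → S 1 k = R 1 (k - 1))
    (hSj1 : ∀ j, 1 < j → j ≤ n → S j 1 = R (j - 1) 1)
    (hSjk : ∀ j k, 1 < j → j ≤ n → 1 < k → k ≤ m →
      S j k = max (R (j - 1) k) (R j (k - 1)))
    (hmax : ∀ a b, P a → P b → P (max a b))
    (hstep : ∀ j k, 1 ≤ j → j ≤ n → 1 ≤ k → k ≤ m → P (S j k) → P (R j k)) :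
    ∀ j k, 1 ≤ j → j ≤ n → 1 ≤ k → k ≤ m → P (R j k) := by
  intro j k
  induction h : j + k using Nat.strong_induction_on generalizing j k with
  | _ N ih =>
    intro hj hjn hk hkm
    refine hstep j k hj hjn hk hkm ?_
    rcases hj.eq_or_lt with rfl | hj <;> rcases hk.eq_or_lt with rfl | hk
    · exact h11
    · rw [hS1k k hk hkm]
      exact ih _ (by omega) 1 (k - 1) rfl le_rfl hjn (by omega) (by omega)
    · rw [hSj1 j hj hjn]
      exact ih _ (by omega) (j - 1) 1 rfl (by omega) (by omega) le_rfl hkm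
    · rw [hSjk j k hj hjn hk hkm]
      exact hmax _ _ (ih _ (by omega) (j - 1) k rfl (by omega) (by omega) hk.le hkm)
        (ih _ (by omega) j (k - 1) rfl hj.le hjn (by omega) (by omega))

theorem flow_shop_pause_avoids_interval_general
    (n m Te Δp : ℕ)
    (p : ℕ → ℕ → ℕ) (R S : ℕ → ℕ → ℕ)
    (hS11 : S 1 1 = 0)
    (hS1k : ∀ k, 1 < k → k ≤ m → S 1 k = R 1 (k - 1))
    (hSj1 : ∀ j, 1 < j → j ≤ n → S j 1 = R (j - 1) 1)
    (hSjk : ∀ j k, 1 < j → j ≤ n → 1 < k → k ≤ m →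
      S j k = max (R (j - 1) k) (R j (k - 1)))
    (hR : ∀ j k, 1 ≤ j → j ≤ n → 1 ≤ k → k ≤ m →
      R j k = if S j k + p j k ≤ Te then S j k + p j k
        else if Te < S j k then S j k + p j k
        else Te + Δp + p j k) :
    (∀ j k, 1 ≤ j → j ≤ n → 1 ≤ k → k ≤ m →
      R j k ≤ Te ∨ Te + Δp ≤ S j k ∨ Te + Δp ≤ R j k) ∧
    (∀ j k, 1 ≤ j → j ≤ n → 1 ≤ k → k ≤ m →
      ¬(S j k ≤ Te ∧ Te < R j k ∧ R j k ≤ Te + Δp)) := by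
  have hR' : ∀ j k, 1 ≤ j → j ≤ n → 1 ≤ k → k ≤ m →
      R j k = pauseCompletion Te Δp (S j k) (p j k) := hR
  have houtside : ∀ j k, 1 ≤ j → j ≤ n → 1 ≤ k → k ≤ m → OutsidePause Te Δp (R j k) :=
    completion_grid_induction (hS11 ▸ outsidePause_zero Te Δp) hS1k hSj1 hSjk
      (fun _ _ ha hb => ha.max hb)
      (fun j k hj hjn hk hkm hS => hR' j k hj hjn hk hkm ▸ hS.pauseCompletion (p j k))
  refine ⟨fun j k hj hjn hk hkm => ?_, fun j k hj hjn hk hkm => ?_⟩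
  · exact (houtside j k hj hjn hk hkm).imp_right .inr
  · rw [hR' j k hj hjn hk hkm]
    exact not_le_and_pauseCompletion_mem_Ioc Te Δp (S j k) (p j k)

/-- Completion times computed by the pause extension `R_p` avoid the pause
interval `(T_e, T_e + Δ_p]`: every operation either finishes by `T_e`, or
starts at or after `T_e + Δ_p`, or finishes at or after `T_e + Δ_p`; in
particular no operation starts at or before `T_e` and finishes strictly
inside `(T_e, T_e + Δ_p]`. -/
theorem flow_shop_pause_avoids_interval
    (n m Te Δp : ℕ) (hn : 1 ≤ n) (hm : 1 ≤ m)
    (p : ℕ → ℕ → ℕ) (R S : ℕ → ℕ → ℕ)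
    (hS11 : S 1 1 = 0)
    (hS1k : ∀ k, 1 < k → k ≤ m → S 1 k = R 1 (k - 1))
    (hSj1 : ∀ j, 1 < j → j ≤ n → S j 1 = R (j - 1) 1)
    (hSjk : ∀ j k, 1 < j → j ≤ n → 1 < k → k ≤ m →
      S j k = max (R (j - 1) k) (R j (k - 1)))
    (hR : ∀ j k, 1 ≤ j → j ≤ n → 1 ≤ k → k ≤ m →
      R j k = if S j k + p j k ≤ Te then S j k + p j k
        else if Te < S j k then S j k + p j k
        else Te + Δp + p j k) :
    (∀ j k, 1 ≤ j → j ≤ n → 1 ≤ k → k ≤ m →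
      R j k ≤ Te ∨ Te + Δp ≤ S j k ∨ Te + Δp ≤ R j k) ∧
    (∀ j k, 1 ≤ j → j ≤ n → 1 ≤ k → k ≤ m →
      ¬(S j k ≤ Te ∧ Te < R j k ∧ R j k ≤ Te + Δp)) :=
  flow_shop_pause_avoids_interval_general n m Te Δp p R S hS11 hS1k hSj1 hSjk hR
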